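/- Let T : ℝ^d → ℝ^d be a continuously differentiable map such that the derivative DT(x) is invertible for every x and ‖T(x)‖ → ∞ as ‖x‖ → ∞ (T is proper). Then T is a C¹-diffeomorphism of ℝ^d onto itself. -/

import Mathlib

/-!
By the inverse function theorem `T` is a local homeomorphism, and a proper local homeomorphism
between Hausdorff spaces is a covering map (its fibres are compact and discrete, hence finite).
Since `ℝ^d` is simply connected, the identity of the base lifts to a continuous section `s` of `T`;
then `s ∘ T` and `id` are two lifts of `T` agreeing at a point, so they coincide and `T` is a
homeomorphism. Its inverse is `C¹` because the derivative of `T` is everywhere invertible.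
-/

open Filter Function

theorem isProperMap_of_tendsto_cobounded {X Y : Type*} [PseudoMetricSpace X] [ProperSpace X]
    [MetricSpace Y] [ProperSpace Y] {f : X → Y} (hf : Continuous f)
    (h : Tendsto f (Bornology.cobounded X) (Bornology.cobounded Y)) : IsProperMap f := by
  rw [isProperMap_iff_tendsto_cocompact, ← Metric.cobounded_eq_cocompact,
    ← Metric.cobounded_eq_cocompact]
  exact ⟨hf, h⟩

theorem isLocalHomeomorph_of_hasStrictFDerivAt {𝕜 E F : Type*} [NontriviallyNormedField 𝕜]
    [NormedAddCommGroup E] [NormedSpace 𝕜 E] [CompleteSpace E]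
    [NormedAddCommGroup F] [NormedSpace 𝕜 F] {f : E → F} {f' : E → E ≃L[𝕜] F}
    (hf : ∀ x, HasStrictFDerivAt f (f' x : E →L[𝕜] F) x) : IsLocalHomeomorph f := fun x =>
  ⟨(hf x).toOpenPartialHomeomorph f, (hf x).mem_toOpenPartialHomeomorph_source,
    (hf x).toOpenPartialHomeomorph_coe.symm⟩

section Covering

variable {E X : Type*} [TopologicalSpace E] [TopologicalSpace X] {p : E → X}

theorem IsProperMap.isCoveringMap [T2Space E] (hproper : IsProperMap p)
    (hloc : IsLocalHomeomorph p) : IsCoveringMap p := by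
  have hfiber (x : X) : (p ⁻¹' {x}).Finite :=
    (hproper.isCompact_preimage isCompact_singleton).finite
      (IsDiscrete.of_openPartialHomeomorph p subset_rfl fun e _ => by
        obtain ⟨φ, he, hφ⟩ := hloc e
        exact ⟨φ, he, hφ.symm⟩)
  rw [isCoveringMap_iff_isCoveringMapOn_univ]
  exact hproper.isClosedMap.isCoveringMapOn_of_isLocalHomeomorphOn (fun x _ => hfiber x)
    (by simpa [← isLocalHomeomorph_iff_isLocalHomeomorphOn_univ] using hloc)

theorem IsCoveringMap.bijective_of_simplyConnectedSpace [SimplyConnectedSpace X]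
    [LocallyPathConnectedSpace X] [PreconnectedSpace E] [Nonempty E] (cov : IsCoveringMap p) :
    Bijective p := by
  obtain ⟨e₀⟩ := ‹Nonempty E›
  obtain ⟨s, ⟨hs₀, hps⟩, -⟩ := cov.existsUnique_continuousMap_lifts (.id X) (p e₀) e₀ rfl
  have hsp : s ∘ p = id :=
    cov.eq_of_comp_eq (s.continuous.comp cov.continuous) continuous_id
      (by rw [← comp_assoc, hps]; rfl) e₀ hs₀
  exact ⟨LeftInverse.injective (congrFun hsp), RightInverse.surjective (congrFun hps)⟩

end Covering

/-- Hadamard's global inverse function theorem: a `C¹` map `T : ℝ^d → ℝ^d`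
whose derivative is invertible everywhere and which is proper
(`‖T x‖ → ∞` as `‖x‖ → ∞`) is a `C¹`-diffeomorphism of `ℝ^d` onto itself. -/
theorem hadamard_global_diffeomorphism
    (d : ℕ) (T : EuclideanSpace ℝ (Fin d) → EuclideanSpace ℝ (Fin d))
    (hT : ContDiff ℝ 1 T)
    (hinv : ∀ x, Function.Bijective (fderiv ℝ T x))
    (hproper : Filter.Tendsto (fun x => ‖T x‖) (Bornology.cobounded (EuclideanSpace ℝ (Fin d)))
      Filter.atTop) :
    Function.Bijective T ∧ ContDiff ℝ 1 (Function.invFun T) := by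
  let T' x := (LinearEquiv.ofBijective _ (hinv x)).toContinuousLinearEquiv
  have hT' x : HasStrictFDerivAt T (T' x : _ →L[ℝ] _) x :=
    hT.contDiffAt.hasStrictFDerivAt one_ne_zero
  have hloc : IsLocalHomeomorph T := isLocalHomeomorph_of_hasStrictFDerivAt hT'
  have hcov : IsCoveringMap T := (isProperMap_of_tendsto_cobounded hT.continuous
    (tendsto_norm_atTop_iff_cobounded.mp hproper)).isCoveringMap hloc
  let Φ := hloc.toHomeomorphOfBijective hcov.bijective_of_simplyConnectedSpace
  have hinvFun : invFun T = Φ.symm :=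
    invFun_eq_of_injective_of_rightInverse Φ.injective Φ.apply_symm_apply
  exact ⟨Φ.bijective, hinvFun ▸ Φ.contDiff_symm (fun x => (hT' x).hasFDerivAt) hT⟩
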